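/- Let (L,[·,·]) be a Z-graded Lie algebra with bracket of degree n, d a differential of odd degree m with d² = 0 which is a derivation of [·,·], and L₀ ⊆ L an abelian graded subalgebra (i.e. [L₀,L₀] = 0) which is closed under the derived bracket [a,b]_d = (-1)^{m(n+|a|)+1}[da,b]. Then [·,·]_d restricted to L₀ is graded antisymmetric of degree n+m, hence a graded Lie bracket of degree n+m on L₀. -/
import Mathlib


/-- The sign `(-1)^x` (for an integer exponent `x`; only the parity of `x` matters). -/
def gsgn (K : Type*) [Field K] (x : ℤ) : K := (-1 : K) ^ x.natAbs

lemma gsgn_even {K : Type*} [Field K] {x : ℤ} (h : Even x) : gsgn K x = 1 := by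
  unfold gsgn; exact (Int.natAbs_even.mpr h).neg_one_pow

lemma gsgn_odd {K : Type*} [Field K] {x : ℤ} (h : Odd x) : gsgn K x = -1 := by
  unfold gsgn; exact (Int.natAbs_odd.mpr h).neg_one_pow

lemma gsgn_mul {K : Type*} [Field K] (x y : ℤ) :
    gsgn K x * gsgn K y = gsgn K (x + y) := by
  rcases Int.even_or_odd x with hx | hx <;> rcases Int.even_or_odd y with hy | hy
  · rw [gsgn_even hx, gsgn_even hy, gsgn_even (hx.add hy)]; ring
  · rw [gsgn_even hx, gsgn_odd hy, gsgn_odd (hx.add_odd hy)]; ring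
  · rw [gsgn_odd hx, gsgn_even hy, gsgn_odd (hx.add_even hy)]; ring
  · rw [gsgn_odd hx, gsgn_odd hy, gsgn_even (hx.add_odd hy)]; ring

lemma gsgn_congr {K : Type*} [Field K] {x y : ℤ} (h : Even (x - y)) :
    gsgn K x = gsgn K y := by
  rcases Int.even_or_odd y with hy | hy
  · rw [gsgn_even hy, gsgn_even (by simpa [Int.even_sub, hy] using h)]
  · rw [gsgn_odd hy, gsgn_odd ?_]
    rcases Int.even_or_odd x with hx | hx
    · exact absurd ((Int.even_sub.mp h).mp hx) (Int.not_even_iff_odd.mpr hy)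
    · exact hx

lemma gsgn_smul_gsgn {K : Type*} [Field K] {L : Type*} [AddCommGroup L] [Module K L]
    (x y : ℤ) (v : L) : gsgn K x • gsgn K y • v = gsgn K (x + y) • v := by
  rw [smul_smul, gsgn_mul]

lemma gsgn_succ_smul {K : Type*} [Field K] {L : Type*} [AddCommGroup L] [Module K L]
    (x : ℤ) (v : L) : gsgn K (x + 1) • v = -(gsgn K x • v) := by
  rw [← gsgn_mul, gsgn_odd odd_one, ← neg_smul]; ring_nf

/-- **Derived bracket on an abelian subalgebra.**
Let `(L, br)` be a `ℤ`-graded Lie algebra with bracket of degree `n`, `d` a square-zero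
derivation of the bracket of odd degree `m`, and `L₀ ⊆ L` an abelian graded subalgebra
(`br L₀ L₀ = 0`) closed under the derived bracket
`[a,b]_d := (-1)^(m(n+|a|)+1) • br (d a) b`.  Then on `L₀` the derived bracket is graded
antisymmetric of degree `n + m`; together with the left Leibniz identity (which holds on
all of `L`) it is hence a graded Lie bracket of degree `n + m` on `L₀`. -/
theorem derived_bracket_lie_on_abelian_subalgebra
    (K : Type*) [Field K] [CharZero K]
    (L : Type*) [AddCommGroup L] [Module K L]
    (𝒜 : ℤ → Submodule K L)
    (n m : ℤ) (hm : Odd m)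
    (br : L →ₗ[K] L →ₗ[K] L)
    (d : L →ₗ[K] L)
    (L₀ : Submodule K L)
    -- the bracket has degree `n`
    (hbrdeg : ∀ (i j : ℤ), ∀ a ∈ 𝒜 i, ∀ b ∈ 𝒜 j, br a b ∈ 𝒜 (i + j + n))
    -- graded antisymmetry of `br`
    (hanti : ∀ (i j : ℤ), ∀ a ∈ 𝒜 i, ∀ b ∈ 𝒜 j,
      br a b = - (gsgn K ((i + n) * (j + n)) • br b a))
    -- graded Jacobi identity (left Leibniz form) for `br`
    (hjac : ∀ (i j : ℤ), ∀ a ∈ 𝒜 i, ∀ b ∈ 𝒜 j, ∀ c : L,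
      br a (br b c) = br (br a b) c + gsgn K ((i + n) * (j + n)) • br b (br a c))
    -- `d` has degree `m`, is a differential and a derivation of `br`
    (hddeg : ∀ (i : ℤ), ∀ a ∈ 𝒜 i, d a ∈ 𝒜 (i + m))
    (hd2 : d ∘ₗ d = 0)
    (hder : ∀ (i : ℤ), ∀ a ∈ 𝒜 i, ∀ b : L,
      d (br a b) = br (d a) b + gsgn K (m * (i + n)) • br a (d b))
    -- `L₀` is an abelian subalgebra …
    (habelian : ∀ a ∈ L₀, ∀ b ∈ L₀, br a b = 0)
    -- … closed under the derived bracket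
    (hclosed : ∀ (i : ℤ), ∀ a ∈ L₀ ⊓ 𝒜 i, ∀ b ∈ L₀,
      gsgn K (m * (n + i) + 1) • br (d a) b ∈ L₀) :
    -- graded antisymmetry of degree `n + m` for the derived bracket on `L₀`
    (∀ (i j : ℤ), ∀ a ∈ L₀ ⊓ 𝒜 i, ∀ b ∈ L₀ ⊓ 𝒜 j,
      gsgn K (m * (n + i) + 1) • br (d a) b
        = - (gsgn K ((i + (n + m)) * (j + (n + m))) •
              (gsgn K (m * (n + j) + 1) • br (d b) a)))
    ∧
    -- hence, together with the left Leibniz identity, a graded Lie bracket of degree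
    -- `n + m` on `L₀`:
    (∀ (i j : ℤ), ∀ a ∈ L₀ ⊓ 𝒜 i, ∀ b ∈ L₀ ⊓ 𝒜 j, ∀ c ∈ L₀,
      gsgn K (m * (n + i) + 1) •
          br (d a) (gsgn K (m * (n + j) + 1) • br (d b) c)
        = gsgn K (m * (n + (i + j + n + m)) + 1) •
            br (d (gsgn K (m * (n + i) + 1) • br (d a) b)) c
          + gsgn K ((i + (n + m)) * (j + (n + m))) •
              (gsgn K (m * (n + j) + 1) •
                br (d b) (gsgn K (m * (n + i) + 1) • br (d a) c))) := by
  constructor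
  · intro i j a ha b hb
    obtain ⟨ha0, hai⟩ := ha
    obtain ⟨hb0, hbj⟩ := hb
    have h0 : br a b = 0 := habelian a ha0 b hb0
    have h1 : br (d a) b + gsgn K (m * (i + n)) • br a (d b) = 0 := by
      rw [← hder i a hai b, h0, map_zero]
    have h2 : br a (d b) = - (gsgn K ((i + n) * ((j + m) + n)) • br (d b) a) :=
      hanti i (j + m) a hai (d b) (hddeg j b hbj)
    have h3 : br (d a) b
        = gsgn K (m * (i + n) + (i + n) * (j + m + n)) • br (d b) a := by
      rw [eq_neg_of_add_eq_zero_left h1, h2, smul_neg, neg_neg, gsgn_smul_gsgn]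
    rw [h3, gsgn_smul_gsgn, gsgn_smul_gsgn, ← gsgn_succ_smul]
    apply congrArg (· • br (d b) a)
    apply gsgn_congr
    obtain ⟨k, hk⟩ := hm
    subst hk
    exact ⟨-1 - 2*k - 2*k^2 - j - 2*j*k + i + 2*i*k, by ring⟩
  · intro i j a ha b hb c _
    obtain ⟨ha0, hai⟩ := ha
    obtain ⟨hb0, hbj⟩ := hb
    have hdda : d (d a) = 0 := by
      have := LinearMap.ext_iff.mp hd2 a
      simpa using this
    have hdab : d (br (d a) b)
        = gsgn K (m * ((i + m) + n)) • br (d a) (d b) := by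
      rw [hder (i + m) (d a) (hddeg i a hai) b, hdda]
      simp
    have hjac' := hjac (i + m) (j + m) (d a) (hddeg i a hai) (d b) (hddeg j b hbj) c
    simp only [map_smul, LinearMap.smul_apply]
    rw [hdab]
    simp only [map_smul, LinearMap.smul_apply, smul_smul, gsgn_mul]
    rw [hjac', smul_add]
    simp only [smul_smul, gsgn_mul, smul_add]
    congr 2
    · apply gsgn_congr
      obtain ⟨k, hk⟩ := hm
      subst hk
      exact ⟨-1 - 4*k - 4*k^2 - n - 2*n*k - i - 2*i*k, by ring⟩
    · apply gsgn_congr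
      obtain ⟨k, hk⟩ := hm
      subst hk
      exact ⟨0, by ring⟩
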